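/- There exists a constant C > 0 such that for all integers d ≥ 3 and M ≥ 3, the maximal effective resistance of the d-dimensional toroidal grid satisfies R_max(T_{M^d}) ≤ C/d and R_max(T_{M^d}) ≥ 1/(C d); that is, max over v ∈ {0,...,M-1}^d, v ≠ 0, of M^{-d} Σ_{k ∈ {0,...,M-1}^d, k ≠ 0} (2 - 2cos(2π (Σ_{i=1}^d k_i v_i)/M)) · (2d - 2 Σ_{i=1}^d cos(2π k_i / M))^{-1} lies between 1/(Cd) and C/d. -/

import Mathlib

open Real Finset

/-- Effective resistance between vertex `0` and vertex `v ∈ {0,...,M-1}^d` in the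
`d`-dimensional toroidal grid `T_{M^d}` (spectral/Fourier formula). -/
noncomputable def ReffTorus (d M : ℕ) (v : Fin d → ℕ) : ℝ :=
  (1 / (M : ℝ) ^ d) *
    ∑ k ∈ (Fintype.piFinset fun _ : Fin d => Finset.range M).filter (· ≠ 0),
      (2 - 2 * Real.cos (2 * π * (∑ i, (k i : ℝ) * (v i : ℝ)) / M)) *
        (2 * d - 2 * ∑ i, Real.cos (2 * π * k i / M))⁻¹

/-- Maximal effective resistance of `T_{M^d}`: the maximum of `R_eff(0,v)` over
nonzero vertices `v`. -/
noncomputable def RmaxTorus (d M : ℕ) : ℝ :=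
  sSup (ReffTorus d M ''
    {v : Fin d → ℕ | v ∈ Fintype.piFinset (fun _ : Fin d => Finset.range M) ∧ v ≠ 0})

/-!
Write `λ k = ∑ i, (2 - 2 cos (2π kᵢ / M))` for the Laplacian eigenvalues of the torus. Summing the
numerators of `R(0, eⱼ)` over `j` gives `λ k` itself, so `∑ j, R(0, eⱼ) = 1 - M⁻ᵈ` (Foster's
theorem) and some `R(0, eⱼ)` is at least `1 / (2d)`.

For the upper bound the numerators are at most `4`, so it suffices to show
`∑ k ≠ 0, 1 / λ k = O(Mᵈ / d)`. Jordan's inequality gives `2 - 2 cos (2π a / M) ≥ 16 ‖a‖² / M²`,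
where `‖a‖` is the distance from `a` to `0` modulo `M`. If some coordinate of `k` is far from `0`
(`16 ‖kᵢ‖ ≥ M`), then `λ k` is at least a sixteenth of the number `N` of far coordinates; `N` is
binomial with success probability at least `1/2`, and `E[1 / (N + 1)] ≤ 2 / (d + 1)`. Otherwise
`1 / λ k ≤ M² / (16 r²)` with `r = maxᵢ ‖kᵢ‖`; the shell `{max = r}` has at most `2d (2r+1)ᵈ⁻¹`
points, and since `d ≥ 3` the sum over the shells `r < M / 16` is `O(d (3/16)ᵈ⁻¹ Mᵈ)`.
-/

open Fintype (piFinset mem_piFinset card_piFinset)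

namespace TorusResistance

section Combinatorics

variable {ι α : Type*} [Fintype ι] [DecidableEq ι]

theorem card_piFinset_ite (T : Finset ι) (A B : Finset α) :
    #(piFinset fun i => if i ∈ T then A else B) = #A ^ #T * #B ^ (Fintype.card ι - #T) := by
  simp only [card_piFinset, apply_ite Finset.card]
  rw [prod_ite, prod_const, prod_const, filter_mem_eq_inter, univ_inter,
    filter_notMem_eq_sdiff, card_univ_sdiff]

theorem sum_piFinset_card_filter {R : Type*} [AddCommMonoid R] (s : Finset α) (p : α → Prop)
    [DecidablePred p] (F : ℕ → R) :
    ∑ k ∈ piFinset fun _ : ι => s, F #{i | p (k i)} =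
      ∑ N ∈ range (Fintype.card ι + 1),
        ((Fintype.card ι).choose N *
          (#{a ∈ s | p a} ^ N * #{a ∈ s | ¬p a} ^ (Fintype.card ι - N))) • F N := by
  have fiber (T : Finset ι) : {k ∈ piFinset fun _ : ι => s | ({i | p (k i)} : Finset ι) = T} =
      piFinset fun i => if i ∈ T then {a ∈ s | p a} else {a ∈ s | ¬p a} := by
    ext k
    simp only [mem_filter, mem_piFinset, Finset.ext_iff, mem_univ, true_and]
    constructor
    · rintro ⟨hks, hkT⟩ i
      by_cases hi : i ∈ T <;> simp [hi, hks i, hkT i]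
    · intro hk
      have hk' (i : ι) : k i ∈ s ∧ (p (k i) ↔ i ∈ T) := by
        by_cases hi : i ∈ T <;> simpa [hi] using hk i
      exact ⟨fun i => (hk' i).1, fun i => (hk' i).2⟩
  calc ∑ k ∈ piFinset fun _ : ι => s, F #{i | p (k i)}
      = ∑ T ∈ univ.powerset, ∑ k ∈ piFinset (fun _ : ι => s) with
          ({i | p (k i)} : Finset ι) = T, F #{i | p (k i)} :=
        (sum_fiberwise_of_maps_to (fun _ _ => mem_powerset.2 (subset_univ _)) _).symm
    _ = ∑ T ∈ (univ : Finset ι).powerset,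
          (#{a ∈ s | p a} ^ #T * #{a ∈ s | ¬p a} ^ (Fintype.card ι - #T)) • F #T := by
        refine Finset.sum_congr rfl fun T _ => ?_
        rw [Finset.sum_congr rfl fun k hk => by rw [(mem_filter.1 hk).2], sum_const, fiber,
          card_piFinset_ite]
    _ = _ := by
        rw [sum_powerset_apply_card
          (fun N => (#{a ∈ s | p a} ^ N * #{a ∈ s | ¬p a} ^ (Fintype.card ι - N)) • F N)]
        simp only [card_univ, smul_smul]

theorem card_filter_sup_eq_le [DecidableEq α] [Nonempty ι] (s : Finset α) (f : α → ℕ) (r : ℕ) :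
    #{k ∈ piFinset (fun _ : ι => s) | univ.sup (fun i => f (k i)) = r} ≤
      Fintype.card ι * (#{a ∈ s | f a = r} * #{a ∈ s | f a ≤ r} ^ (Fintype.card ι - 1)) := by
  have cover : {k ∈ piFinset (fun _ : ι => s) | univ.sup (fun i => f (k i)) = r} ⊆
      univ.biUnion fun i₀ =>
        piFinset fun i =>
          if i ∈ ({i₀} : Finset ι) then {a ∈ s | f a = r} else {a ∈ s | f a ≤ r} := by
    intro k hk
    obtain ⟨hks, hkr⟩ := mem_filter.1 hk
    obtain ⟨i₀, -, hi₀⟩ := exists_mem_eq_sup univ univ_nonempty fun i => f (k i)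
    refine mem_biUnion.2 ⟨i₀, mem_univ _, mem_piFinset.2 fun i => ?_⟩
    have hki := mem_piFinset.1 hks i
    by_cases hi : i = i₀
    · subst hi; simp [hki, ← hi₀, hkr]
    · simpa [hi, hki, ← hkr] using le_sup (f := fun i => f (k i)) (mem_univ i)
  calc _ ≤ _ := card_le_card cover
    _ ≤ _ := card_biUnion_le
    _ = _ := by
      simp only [card_piFinset_ite, card_singleton, pow_one, sum_const, card_univ, smul_eq_mul]

end Combinatorics

theorem sum_choose_mul_pow_mul_pow_div_succ {K : Type*} [Field K] [CharZero K] (x y : K) (n : ℕ) :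
    (n + 1) * x * ∑ N ∈ range (n + 1), n.choose N * x ^ N * y ^ (n - N) / (N + 1) =
      (x + y) ^ (n + 1) - y ^ (n + 1) := by
  rw [add_pow, sum_range_succ' _ (n + 1), mul_sum]
  simp only [Nat.choose_zero_right, pow_zero, Nat.cast_one, one_mul, mul_one, Nat.sub_zero,
    add_sub_cancel_right]
  refine sum_congr rfl fun N _ => ?_
  have hchoose : ((n + 1 : ℕ) : K) * n.choose N = (n + 1).choose (N + 1) * (N + 1 : ℕ) := by
    exact_mod_cast Nat.add_one_mul_choose_eq n N
  rw [show n + 1 - (N + 1) = n - N by omega]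
  push_cast at hchoose
  field_simp
  linear_combination x * x ^ N * y ^ (n - N) * hchoose

def circDist (M a : ℕ) : ℕ := min a (M - a)

theorem card_filter_circDist_le (M r : ℕ) : #{a ∈ range M | circDist M a ≤ r} ≤ 2 * r + 1 :=
  calc _ ≤ #(range (r + 1) ∪ Ico (M - r) M) := card_le_card fun a ha => by
        rw [mem_filter, mem_range, circDist] at ha
        simp only [mem_union, mem_range, mem_Ico]
        omega
    _ ≤ #(range (r + 1)) + #(Ico (M - r) M) := card_union_le _ _
    _ ≤ 2 * r + 1 := by simp only [card_range, Nat.card_Ico]; omega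

theorem card_filter_circDist_eq_le (M r : ℕ) : #{a ∈ range M | circDist M a = r} ≤ 2 :=
  calc _ ≤ #({r, M - r} : Finset ℕ) := card_le_card fun a ha => by
        rw [mem_filter, mem_range, circDist] at ha
        simp only [mem_insert, mem_singleton]
        omega
    _ ≤ 2 := card_le_two

theorem le_two_mul_card_filter_le_sixteen_mul_circDist {M : ℕ} (hM : 3 ≤ M) :
    M ≤ 2 * #{a ∈ range M | M ≤ 16 * circDist M a} := by
  have hnear : #{a ∈ range M | ¬M ≤ 16 * circDist M a} ≤ 2 * ((M - 1) / 16) + 1 :=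
    (card_le_card (monotone_filter_right _ fun a h => by omega)).trans
      (card_filter_circDist_le M _)
  have hsplit :=
    card_filter_add_card_filter_not (s := range M) (p := fun a => M ≤ 16 * circDist M a)
  rw [card_range] at hsplit
  omega

noncomputable def cycleEigenvalue (M : ℕ) (x : ℝ) : ℝ := 2 - 2 * cos (2 * π * x / M)

theorem cycleEigenvalue_nonneg (M : ℕ) (x : ℝ) : 0 ≤ cycleEigenvalue M x := by
  unfold cycleEigenvalue
  linarith [cos_le_one (2 * π * x / M)]

theorem cycleEigenvalue_le_four (M : ℕ) (x : ℝ) : cycleEigenvalue M x ≤ 4 := by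
  unfold cycleEigenvalue
  linarith [neg_one_le_cos (2 * π * x / M)]

theorem sixteen_mul_circDist_sq_div_le_cycleEigenvalue {M a : ℕ} (ha : a ≤ M) :
    16 * (circDist M a : ℝ) ^ 2 / M ^ 2 ≤ cycleEigenvalue M a := by
  rcases Nat.eq_zero_or_pos M with rfl | hM
  · simp [cycleEigenvalue]
  have hMr : (0 : ℝ) < M := by exact_mod_cast hM
  have jordan (x : ℝ) (hx : |x| ≤ π) : 4 / π ^ 2 * x ^ 2 ≤ 2 - 2 * cos x := by
    have hcos := cos_le_one_sub_mul_cos_sq hx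
    have : 4 / π ^ 2 * x ^ 2 = 2 * (2 / π ^ 2 * x ^ 2) := by ring
    linarith
  rw [cycleEigenvalue, circDist]
  rcases le_total a (M - a) with h | h
  · rw [min_eq_left h]
    have hx : |2 * π * a / M| ≤ π := by
      rw [abs_of_nonneg (by positivity), div_le_iff₀ hMr]
      have : (2 * a : ℝ) ≤ M := by exact_mod_cast (by omega : 2 * a ≤ M)
      nlinarith [pi_pos]
    convert jordan _ hx using 1
    field_simp
    ring
  · rw [min_eq_right h, ← cos_sub_two_pi, Nat.cast_sub ha]
    have hx : |2 * π * a / M - 2 * π| ≤ π := by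
      rw [abs_sub_comm, abs_of_nonneg, sub_le_iff_le_add, ← sub_le_iff_le_add', le_div_iff₀ hMr]
      · have : (M : ℝ) ≤ 2 * a := by exact_mod_cast (by omega : M ≤ 2 * a)
        nlinarith [pi_pos]
      · rw [sub_nonneg, div_le_iff₀ hMr]
        have : (a : ℝ) ≤ M := by exact_mod_cast ha
        nlinarith [pi_pos]
    convert jordan _ hx using 1
    field_simp
    ring

theorem cycleEigenvalue_pos {M a : ℕ} (ha₀ : 0 < a) (ha : a < M) : 0 < cycleEigenvalue M a := by
  have hdist : (1 : ℝ) ≤ circDist M a := by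
    exact_mod_cast (show 1 ≤ circDist M a by rw [circDist]; omega)
  have hM : (0 : ℝ) < M := by exact_mod_cast ha₀.trans ha
  refine lt_of_lt_of_le ?_ (sixteen_mul_circDist_sq_div_le_cycleEigenvalue ha.le)
  positivity

section Torus

variable {d M : ℕ}

noncomputable def torusEigenvalue (M : ℕ) (k : Fin d → ℕ) : ℝ := ∑ i, cycleEigenvalue M (k i)

theorem torusEigenvalue_nonneg (M : ℕ) (k : Fin d → ℕ) : 0 ≤ torusEigenvalue M k :=
  sum_nonneg fun i _ => cycleEigenvalue_nonneg M (k i)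

theorem torusEigenvalue_pos {k : Fin d → ℕ} (hk : k ∈ piFinset fun _ => range M) (hk₀ : k ≠ 0) :
    0 < torusEigenvalue M k := by
  obtain ⟨i, hi⟩ := Function.ne_iff.1 hk₀
  have hki := mem_range.1 (mem_piFinset.1 hk i)
  exact sum_pos' (fun j _ => cycleEigenvalue_nonneg M _)
    ⟨i, mem_univ i, cycleEigenvalue_pos (Nat.pos_of_ne_zero hi) hki⟩

theorem reffTorus_eq (v : Fin d → ℕ) :
    ReffTorus d M v = (M ^ d : ℝ)⁻¹ * ∑ k ∈ (piFinset fun _ : Fin d => range M).filter (· ≠ 0),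
      cycleEigenvalue M (∑ i, (k i : ℝ) * v i) / torusEigenvalue M k := by
  have hden (k : Fin d → ℕ) :
      2 * (d : ℝ) - 2 * ∑ i, cos (2 * π * k i / M) = torusEigenvalue M k := by
    simp only [torusEigenvalue, cycleEigenvalue, sum_sub_distrib, ← mul_sum, sum_const, card_univ,
      Fintype.card_fin, nsmul_eq_mul]
    ring
  rw [ReffTorus, one_div]
  refine congrArg _ (sum_congr rfl fun k _ => ?_)
  rw [hden, div_eq_mul_inv (cycleEigenvalue M _)]
  rfl

theorem sum_reffTorus_single (hM : 0 < M) :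
    ∑ j, ReffTorus d M (Pi.single j 1) = 1 - (M ^ d : ℝ)⁻¹ := by
  have hcoord (k : Fin d → ℕ) (j : Fin d) :
      ∑ i, (k i : ℝ) * ((Pi.single j 1 : Fin d → ℕ) i : ℝ) = k j := by
    simp [Pi.single_apply]
  have hone : ∀ k ∈ (piFinset fun _ : Fin d => range M).filter (· ≠ 0),
      ∑ j, cycleEigenvalue M (∑ i, (k i : ℝ) * ((Pi.single j 1 : Fin d → ℕ) i : ℝ)) /
        torusEigenvalue M k = 1 := by
    intro k hk
    obtain ⟨hkM, hk₀⟩ := mem_filter.1 hk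
    simp only [hcoord, ← sum_div]
    exact div_self (torusEigenvalue_pos hkM hk₀).ne'
  have hcard : #((piFinset fun _ : Fin d => range M).filter (· ≠ 0)) = M ^ d - 1 := by
    rw [filter_ne', card_erase_of_mem (by simpa using fun _ => hM), card_piFinset]
    simp
  simp only [reffTorus_eq, ← mul_sum]
  rw [sum_comm, sum_congr rfl hone, sum_const, hcard, nsmul_eq_mul, mul_one,
    Nat.cast_sub (Nat.one_le_pow _ _ hM)]
  have : (M : ℝ) ^ d ≠ 0 := by positivity
  push_cast
  field_simp

theorem reffTorus_le_rmaxTorus {v : Fin d → ℕ} (hv : v ∈ piFinset fun _ => range M)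
    (hv₀ : v ≠ 0) : ReffTorus d M v ≤ RmaxTorus d M :=
  le_csSup ((Set.Finite.subset (finite_toSet _) fun _ h => h.1).image _).bddAbove
    ⟨v, ⟨hv, hv₀⟩, rfl⟩

theorem one_div_two_mul_le_rmaxTorus (hd : 0 < d) (hM : 2 ≤ M) :
    1 / (2 * d) ≤ RmaxTorus d M := by
  have hsingle (j : Fin d) : ReffTorus d M (Pi.single j 1) ≤ RmaxTorus d M :=
    reffTorus_le_rmaxTorus (mem_piFinset.2 fun i => by
      rw [mem_range, Pi.single_apply]; split_ifs <;> omega) (by simp)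
  have hsum : 1 - (M ^ d : ℝ)⁻¹ ≤ d * RmaxTorus d M := by
    rw [← sum_reffTorus_single (by omega)]
    simpa using sum_le_sum fun j (_ : j ∈ univ) => hsingle j
  have hMd : (2 : ℝ) ≤ M ^ d := by
    exact_mod_cast hM.trans (Nat.le_self_pow hd.ne' M)
  have hdr : (0 : ℝ) < d := by exact_mod_cast hd
  have hinv : (M ^ d : ℝ)⁻¹ ≤ 1 / 2 := by
    rw [inv_le_comm₀ (by positivity) (by norm_num)]; linarith
  rw [div_le_iff₀ (by positivity)]
  linarith

theorem reffTorus_le (v : Fin d → ℕ) :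
    ReffTorus d M v ≤ 4 / M ^ d * ∑ k ∈ (piFinset fun _ : Fin d => range M).filter (· ≠ 0),
      (torusEigenvalue M k)⁻¹ := by
  calc ReffTorus d M v
      = (M ^ d : ℝ)⁻¹ * ∑ k ∈ (piFinset fun _ : Fin d => range M).filter (· ≠ 0),
          cycleEigenvalue M (∑ i, (k i : ℝ) * v i) / torusEigenvalue M k := reffTorus_eq v
    _ ≤ (M ^ d : ℝ)⁻¹ * ∑ k ∈ (piFinset fun _ : Fin d => range M).filter (· ≠ 0),
          4 * (torusEigenvalue M k)⁻¹ := by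
        gcongr with k
        rw [div_eq_mul_inv]
        exact mul_le_mul_of_nonneg_right (cycleEigenvalue_le_four M _)
          (inv_nonneg.2 (torusEigenvalue_nonneg M k))
    _ = _ := by rw [← mul_sum]; ring

theorem rmaxTorus_le {c : ℝ} (h : ∀ v, ReffTorus d M v ≤ c) (hc : 0 ≤ c) : RmaxTorus d M ≤ c :=
  Real.sSup_le (by rintro _ ⟨v, -, rfl⟩; exact h v) hc

def maxCircDist (M : ℕ) (k : Fin d → ℕ) : ℕ := univ.sup fun i => circDist M (k i)

theorem card_filter_maxCircDist_eq_le [NeZero d] (M r : ℕ) :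
    #{k ∈ piFinset (fun _ : Fin d => range M) | maxCircDist M k = r} ≤
      d * (2 * (2 * r + 1) ^ (d - 1)) :=
  (card_filter_sup_eq_le _ _ r).trans <| by
    rw [Fintype.card_fin]
    gcongr
    exacts [card_filter_circDist_eq_le M r, card_filter_circDist_le M r]

theorem one_le_maxCircDist {k : Fin d → ℕ} (hk : k ∈ piFinset fun _ => range M) (hk₀ : k ≠ 0) :
    1 ≤ maxCircDist M k := by
  obtain ⟨i, hi⟩ := Function.ne_iff.1 hk₀
  have hi : k i ≠ 0 := hi
  have hki := mem_range.1 (mem_piFinset.1 hk i)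
  exact le_trans (by rw [circDist]; omega)
    (le_sup (f := fun i => circDist M (k i)) (mem_univ i))

theorem inv_torusEigenvalue_le_of_ne_zero {k : Fin d → ℕ} (hk : k ∈ piFinset fun _ => range M)
    (hk₀ : k ≠ 0) : (torusEigenvalue M k)⁻¹ ≤ M ^ 2 / (16 * maxCircDist M k ^ 2) := by
  obtain ⟨i, -⟩ := Function.ne_iff.1 hk₀
  obtain ⟨i₀, -, hi₀⟩ := exists_mem_eq_sup univ ⟨i, mem_univ i⟩ fun i => circDist M (k i)
  have hki₀ := mem_range.1 (mem_piFinset.1 hk i₀)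
  have hr : (1 : ℝ) ≤ maxCircDist M k := by exact_mod_cast one_le_maxCircDist hk hk₀
  have hM : (0 : ℝ) < M := by exact_mod_cast (Nat.zero_le _).trans_lt hki₀
  have hlow : 16 * (maxCircDist M k : ℝ) ^ 2 / M ^ 2 ≤ torusEigenvalue M k :=
    calc 16 * (maxCircDist M k : ℝ) ^ 2 / M ^ 2 ≤ cycleEigenvalue M (k i₀) := by
          rw [maxCircDist, hi₀]
          exact sixteen_mul_circDist_sq_div_le_cycleEigenvalue hki₀.le
      _ ≤ torusEigenvalue M k :=
          single_le_sum (fun i _ => cycleEigenvalue_nonneg M (k i)) (mem_univ i₀)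
  rw [← inv_div]
  exact inv_anti₀ (by positivity) hlow

theorem succ_sq_mul_three_pow_le (n : ℕ) : (n + 1) ^ 2 * 3 ^ n ≤ 16 ^ n :=
  calc (n + 1) ^ 2 * 3 ^ n ≤ (2 ^ n) ^ 2 * 3 ^ n := by gcongr; exact Nat.lt_two_pow_self
    _ = 12 ^ n := by rw [← pow_mul, mul_comm n, pow_mul, ← mul_pow]; norm_num
    _ ≤ 16 ^ n := Nat.pow_le_pow_left (by norm_num) n

theorem sum_shell_count_mul_div_sq_le (hd : 3 ≤ d) {t : ℕ} (ht : 16 * t ≤ M) :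
    ∑ r ∈ Icc 1 t,
        ((d * (2 * (2 * r + 1) ^ (d - 1)) : ℕ) : ℝ) * ((M : ℝ) ^ 2 / (16 * (r : ℝ) ^ 2)) ≤
      2 * (M : ℝ) ^ d / d := by
  obtain ⟨e, rfl⟩ : ∃ e, d = e + 3 := ⟨d - 3, by omega⟩
  rw [show e + 3 - 1 = e + 2 by omega]
  have htM : (t : ℝ) ≤ M / 16 := by
    rw [le_div_iff₀ (by norm_num)]; exact_mod_cast (by omega : t * 16 ≤ M)
  have hterm : ∀ r ∈ Icc 1 t, (((e + 3) * (2 * (2 * r + 1) ^ (e + 2)) : ℕ) : ℝ) *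
      ((M : ℝ) ^ 2 / (16 * (r : ℝ) ^ 2)) ≤ (e + 3) * 3 ^ (e + 2) * M ^ 2 / 8 * t ^ e := by
    intro r hr
    obtain ⟨hr₁, hrt⟩ := mem_Icc.1 hr
    have hr₁' : (1 : ℝ) ≤ r := by exact_mod_cast hr₁
    have hpow : (2 * r + 1 : ℝ) ^ (e + 2) ≤ 3 ^ (e + 2) * t ^ e * r ^ 2 :=
      calc (2 * r + 1 : ℝ) ^ (e + 2) ≤ (3 * r) ^ (e + 2) :=
            pow_le_pow_left₀ (by positivity) (by linarith) _
        _ = 3 ^ (e + 2) * r ^ e * r ^ 2 := by ring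
        _ ≤ 3 ^ (e + 2) * t ^ e * r ^ 2 := by gcongr
    push_cast
    calc ((e : ℝ) + 3) * (2 * (2 * r + 1) ^ (e + 2)) * (M ^ 2 / (16 * r ^ 2))
        ≤ ((e : ℝ) + 3) * (2 * (3 ^ (e + 2) * t ^ e * r ^ 2)) * (M ^ 2 / (16 * r ^ 2)) := by
          gcongr
      _ = _ := by field_simp; ring
  have hcount : ((e + 2 + 1 : ℕ) : ℝ) ^ 2 * 3 ^ (e + 2) ≤ 16 ^ (e + 2) := by
    exact_mod_cast succ_sq_mul_three_pow_le (e + 2)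
  push_cast at hcount
  calc _ ≤ ∑ _r ∈ Icc 1 t, (e + 3) * 3 ^ (e + 2) * (M : ℝ) ^ 2 / 8 * t ^ e := sum_le_sum hterm
    _ = (e + 3) * 3 ^ (e + 2) * (M : ℝ) ^ 2 / 8 * t ^ (e + 1) := by
        rw [sum_const, Nat.card_Icc, nsmul_eq_mul, Nat.add_sub_cancel]; ring
    _ ≤ (e + 3) * 3 ^ (e + 2) * (M : ℝ) ^ 2 / 8 * (M / 16) ^ (e + 1) := by gcongr
    _ = (((e : ℝ) + 2 + 1) ^ 2 * 3 ^ (e + 2) / 16 ^ (e + 2)) * (2 * M ^ (e + 3) / (e + 3)) := by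
        rw [div_pow]; field_simp; ring
    _ ≤ 2 * M ^ (e + 3) / ((e + 3 : ℕ) : ℝ) := by
        push_cast
        exact mul_le_of_le_one_left (by positivity) ((div_le_one (by positivity)).2 hcount)

theorem sum_near_inv_torusEigenvalue_le (hd : 3 ≤ d) :
    ∑ k ∈ piFinset (fun _ : Fin d => range M) with k ≠ 0 ∧ 16 * maxCircDist M k < M,
      (torusEigenvalue M k)⁻¹ ≤ 2 * (M : ℝ) ^ d / d := by
  have : NeZero d := ⟨by omega⟩
  set S := {k ∈ piFinset (fun _ : Fin d => range M) | k ≠ 0 ∧ 16 * maxCircDist M k < M}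
  have hmaps : ∀ k ∈ S, maxCircDist M k ∈ Icc 1 ((M - 1) / 16) := by
    intro k hk
    obtain ⟨hkM, hk₀, hnear⟩ := mem_filter.1 hk
    exact mem_Icc.2 ⟨one_le_maxCircDist hkM hk₀, by omega⟩
  calc ∑ k ∈ S, (torusEigenvalue M k)⁻¹
      ≤ ∑ k ∈ S, (M : ℝ) ^ 2 / (16 * (maxCircDist M k : ℝ) ^ 2) :=
        sum_le_sum fun k hk =>
          inv_torusEigenvalue_le_of_ne_zero (mem_filter.1 hk).1 (mem_filter.1 hk).2.1
    _ = ∑ r ∈ Icc 1 ((M - 1) / 16), ∑ k ∈ S with maxCircDist M k = r,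
          (M : ℝ) ^ 2 / (16 * (maxCircDist M k : ℝ) ^ 2) :=
        (sum_fiberwise_of_maps_to hmaps _).symm
    _ ≤ ∑ r ∈ Icc 1 ((M - 1) / 16),
          ((d * (2 * (2 * r + 1) ^ (d - 1)) : ℕ) : ℝ) * ((M : ℝ) ^ 2 / (16 * (r : ℝ) ^ 2)) := by
        refine sum_le_sum fun r _ => ?_
        rw [Finset.sum_congr rfl fun k hk => by rw [(mem_filter.1 hk).2], sum_const, nsmul_eq_mul]
        gcongr
        exact (card_le_card (filter_subset_filter _ (filter_subset _ _))).trans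
          (card_filter_maxCircDist_eq_le M r)
    _ ≤ 2 * (M : ℝ) ^ d / d := sum_shell_count_mul_div_sq_le hd (by omega)

theorem inv_torusEigenvalue_le_of_far [NeZero d] {k : Fin d → ℕ}
    (hk : k ∈ piFinset fun _ => range M) (hfar : M ≤ 16 * maxCircDist M k) :
    (torusEigenvalue M k)⁻¹ ≤ 32 / (#{i | M ≤ 16 * circDist M (k i)} + 1) := by
  set A : Finset (Fin d) := {i | M ≤ 16 * circDist M (k i)}
  obtain ⟨i₀, -, hi₀⟩ := exists_mem_eq_sup univ univ_nonempty fun i => circDist M (k i)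
  have hA : (1 : ℝ) ≤ #A := by
    have : i₀ ∈ A := mem_filter.2 ⟨mem_univ _, by rwa [maxCircDist, hi₀] at hfar⟩
    exact_mod_cast card_pos.2 ⟨i₀, this⟩
  have hkM (i : Fin d) : k i < M := mem_range.1 (mem_piFinset.1 hk i)
  have hM : (0 : ℝ) < M := by exact_mod_cast (Nat.zero_le _).trans_lt (hkM i₀)
  have hfar_coord : ∀ i ∈ A, (1 : ℝ) / 16 ≤ cycleEigenvalue M (k i) := by
    intro i hi
    have hdist : (M : ℝ) ≤ 16 * circDist M (k i) := by exact_mod_cast (mem_filter.1 hi).2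
    refine le_trans ?_ (sixteen_mul_circDist_sq_div_le_cycleEigenvalue (hkM i).le)
    rw [le_div_iff₀ (by positivity)]
    nlinarith
  have hlow : (#A : ℝ) / 16 ≤ torusEigenvalue M k :=
    calc (#A : ℝ) / 16 = ∑ _i ∈ A, (1 : ℝ) / 16 := by rw [sum_const, nsmul_eq_mul]; ring
      _ ≤ ∑ i ∈ A, cycleEigenvalue M (k i) := sum_le_sum hfar_coord
      _ ≤ torusEigenvalue M k := sum_le_sum_of_subset_of_nonneg (subset_univ A)
          fun i _ _ => cycleEigenvalue_nonneg M (k i)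
  calc (torusEigenvalue M k)⁻¹ ≤ ((#A : ℝ) / 16)⁻¹ := inv_anti₀ (by positivity) hlow
    _ = 16 / #A := inv_div _ _
    _ ≤ 32 / (#A + 1) := by rw [div_le_div_iff₀ (by positivity) (by positivity)]; linarith

theorem sum_far_inv_torusEigenvalue_le [NeZero d] (hM : 3 ≤ M) :
    ∑ k ∈ piFinset (fun _ : Fin d => range M) with M ≤ 16 * maxCircDist M k,
      (torusEigenvalue M k)⁻¹ ≤ 64 * (M : ℝ) ^ d / (d + 1) := by
  set b := #{a ∈ range M | M ≤ 16 * circDist M a}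
  set s := #{a ∈ range M | ¬M ≤ 16 * circDist M a}
  set S := ∑ N ∈ range (d + 1), (d.choose N : ℝ) * b ^ N * s ^ (d - N) / (N + 1)
  have hbs : b + s = M := by
    rw [card_filter_add_card_filter_not, card_range]
  have hb : (M : ℝ) ≤ 2 * b := by exact_mod_cast le_two_mul_card_filter_le_sixteen_mul_circDist hM
  have hbpos : (0 : ℝ) < b := by
    have : (3 : ℝ) ≤ M := by exact_mod_cast hM
    linarith
  have hS : (d + 1) * S ≤ 2 * M ^ d := by
    have hbinom := sum_choose_mul_pow_mul_pow_div_succ (b : ℝ) s d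
    have hbs' : (b : ℝ) + s = M := by exact_mod_cast hbs
    rw [hbs'] at hbinom
    have hs : (0 : ℝ) ≤ (s : ℝ) ^ (d + 1) := by positivity
    have hMd : (0 : ℝ) ≤ M ^ d := by positivity
    refine le_of_mul_le_mul_left ?_ hbpos
    nlinarith [pow_succ (M : ℝ) d]
  calc ∑ k ∈ piFinset (fun _ : Fin d => range M) with M ≤ 16 * maxCircDist M k,
        (torusEigenvalue M k)⁻¹
      ≤ ∑ k ∈ piFinset (fun _ : Fin d => range M) with M ≤ 16 * maxCircDist M k,
          (32 : ℝ) / (#{i | M ≤ 16 * circDist M (k i)} + 1) :=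
        sum_le_sum fun k hk =>
          inv_torusEigenvalue_le_of_far (mem_filter.1 hk).1 (mem_filter.1 hk).2
    _ ≤ ∑ k ∈ piFinset (fun _ : Fin d => range M),
          (32 : ℝ) / (#{i | M ≤ 16 * circDist M (k i)} + 1) :=
        sum_le_sum_of_subset_of_nonneg (filter_subset _ _) fun _ _ _ => by positivity
    _ = ∑ N ∈ range (d + 1), (d.choose N * (b ^ N * s ^ (d - N))) • ((32 : ℝ) / (N + 1)) := by
        rw [sum_piFinset_card_filter (range M) (fun a => M ≤ 16 * circDist M a)
          (fun N : ℕ => (32 : ℝ) / (N + 1)), Fintype.card_fin]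
    _ = 32 * S := by
        rw [mul_sum]
        refine Finset.sum_congr rfl fun N _ => ?_
        rw [nsmul_eq_mul]
        push_cast
        ring
    _ ≤ 64 * (M : ℝ) ^ d / (d + 1) := by rw [le_div_iff₀ (by positivity)]; linarith

theorem sum_inv_torusEigenvalue_le (hd : 3 ≤ d) (hM : 3 ≤ M) :
    ∑ k ∈ (piFinset fun _ : Fin d => range M).filter (· ≠ 0), (torusEigenvalue M k)⁻¹ ≤
      66 * (M : ℝ) ^ d / d := by
  have : NeZero d := ⟨by omega⟩
  rw [← sum_filter_add_sum_filter_not _ fun k => 16 * maxCircDist M k < M, filter_filter,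
    filter_filter]
  have hfar : ∑ k ∈ piFinset (fun _ : Fin d => range M) with k ≠ 0 ∧ ¬16 * maxCircDist M k < M,
      (torusEigenvalue M k)⁻¹ ≤
      ∑ k ∈ piFinset (fun _ : Fin d => range M) with M ≤ 16 * maxCircDist M k,
        (torusEigenvalue M k)⁻¹ :=
    sum_le_sum_of_subset_of_nonneg (monotone_filter_right _ fun k h => by omega)
      fun k _ _ => inv_nonneg.2 (torusEigenvalue_nonneg M k)
  have hd' : (0 : ℝ) < d := by exact_mod_cast (by omega : 0 < d)
  have : 64 * (M : ℝ) ^ d / (d + 1) ≤ 64 * (M : ℝ) ^ d / d := by gcongr; linarith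
  have : 2 * (M : ℝ) ^ d / d + 64 * (M : ℝ) ^ d / d = 66 * (M : ℝ) ^ d / d := by ring
  linarith [sum_near_inv_torusEigenvalue_le (M := M) hd,
    sum_far_inv_torusEigenvalue_le (d := d) hM]

end Torus

end TorusResistance

open TorusResistance in
/-- Theorem 6.1 of Chandra–Raghavan–Ruzzo–Smolensky–Tiwari (1989):
`R_max(T_{M^d}) = Θ(1/d)` uniformly in `M`. -/
theorem torus_max_resistance_theta_one_over_d :
    ∃ C : ℝ, 0 < C ∧ ∀ d M : ℕ, 3 ≤ d → 3 ≤ M →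
      RmaxTorus d M ≤ C / d ∧ 1 / (C * d) ≤ RmaxTorus d M := by
  refine ⟨264, by norm_num, fun d M hd hM => ⟨?_, ?_⟩⟩
  · have hd' : (0 : ℝ) < d := by exact_mod_cast (by omega : 0 < d)
    have hM' : (0 : ℝ) < M := by exact_mod_cast (by omega : 0 < M)
    refine rmaxTorus_le (fun v => (reffTorus_le v).trans ?_) (by positivity)
    calc 4 / (M : ℝ) ^ d * ∑ k ∈ (Fintype.piFinset fun _ : Fin d => range M).filter (· ≠ 0),
          (torusEigenvalue M k)⁻¹
        ≤ 4 / (M : ℝ) ^ d * (66 * (M : ℝ) ^ d / d) := by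
          gcongr; exact sum_inv_torusEigenvalue_le hd hM
      _ = 264 / d := by field_simp; ring
  · calc 1 / (264 * (d : ℝ)) ≤ 1 / (2 * d) := by gcongr; norm_num
      _ ≤ RmaxTorus d M := one_div_two_mul_le_rmaxTorus (by omega) (by omega)
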